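/- If s_1,…,s_n are weak contractions on a compact metric space X, then the Hutchinson operator S(A) = ⋃_{i=1}^n s_i[A] maps K(X) to K(X), and S has a unique fixed point in K(X). -/
import Mathlib

open Metric Set TopologicalSpace

/-- Edelstein fixed point theorem: a weak contraction on a nonempty compact
metric space has a unique fixed point. -/
theorem edelstein_aux {Y : Type*} [MetricSpace Y] [CompactSpace Y] [Nonempty Y]
    (f : Y → Y) (hf : ∀ x y : Y, x ≠ y → dist (f x) (f y) < dist x y) :
    ∃! x : Y, f x = x := by
  have hlip : LipschitzWith 1 f := LipschitzWith.of_dist_le_mul fun x y => by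
    rcases eq_or_ne x y with rfl | h
    · simp
    · simpa using (hf x y h).le
  have hcont : Continuous fun x => dist x (f x) :=
    (continuous_id.dist (hlip.continuous))
  obtain ⟨x0, -, hx0⟩ := isCompact_univ.exists_isMinOn univ_nonempty hcont.continuousOn
  have hfix : f x0 = x0 := by
    by_contra h
    have h1 : dist (f x0) (f (f x0)) < dist x0 (f x0) := hf x0 (f x0) (Ne.symm h)
    have h2 : dist x0 (f x0) ≤ dist (f x0) (f (f x0)) := hx0 (mem_univ (f x0))
    linarith
  refine ⟨x0, hfix, fun y hy => ?_⟩
  by_contra h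
  have := hf y x0 h
  rw [hy, hfix] at this
  exact lt_irrefl _ this

theorem stmt14 {X : Type*} [MetricSpace X] [CompactSpace X] [Nonempty X] (n : ℕ)
    (s : Fin (n + 1) → X → X)
    (hs : ∀ i, ∀ x y : X, x ≠ y → dist (s i x) (s i y) < dist x y) :
    ∃! A : TopologicalSpace.NonemptyCompacts X,
      (A : Set X) = ⋃ i, s i '' (A : Set X) := by
  have hc : ∀ i, Continuous (s i) := fun i =>
    (LipschitzWith.of_dist_le_mul fun x y => by
      rcases eq_or_ne x y with rfl | h
      · simp
      · simpa using (hs i x y h).le : LipschitzWith 1 (s i)).continuous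
  -- The Hutchinson operator
  set S : NonemptyCompacts X → NonemptyCompacts X := fun A =>
    ⟨⟨⋃ i, s i '' (A : Set X), isCompact_iUnion fun i => A.isCompact.image (hc i)⟩,
      Set.nonempty_iUnion.2 ⟨0, A.nonempty.image _⟩⟩ with hS
  have hScoe : ∀ A : NonemptyCompacts X, (S A : Set X) = ⋃ i, s i '' (A : Set X) :=
    fun A => rfl
  -- key directed estimate
  have key : ∀ A B : NonemptyCompacts X, 0 < dist A B →
      ∀ x ∈ (S A : Set X), infDist x (S B : Set X) < dist A B := by
    intro A B hr x hx
    rw [hScoe, mem_iUnion] at hx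
    obtain ⟨i, a, ha, rfl⟩ := hx
    obtain ⟨b, hb, hab⟩ := B.isCompact.exists_infDist_eq_dist B.nonempty a
    have hmem : s i b ∈ (S B : Set X) := by
      rw [hScoe, mem_iUnion]; exact ⟨i, mem_image_of_mem _ hb⟩
    have h1 : infDist (s i a) (S B : Set X) ≤ dist (s i a) (s i b) :=
      infDist_le_dist_of_mem hmem
    have hne : EMetric.hausdorffEdist (A : Set X) (B : Set X) ≠ ⊤ :=
      hausdorffEdist_ne_top_of_nonempty_of_bounded A.nonempty B.nonempty
        A.isCompact.isBounded B.isCompact.isBounded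
    have h2 : infDist a (B : Set X) ≤ dist A B := by
      rw [NonemptyCompacts.dist_eq]
      exact infDist_le_hausdorffDist_of_mem ha hne
    rcases eq_or_ne a b with rfl | hab'
    · calc infDist (s i a) (S B : Set X) ≤ dist (s i a) (s i a) := h1
        _ = 0 := by simp
        _ < dist A B := hr
    · calc infDist (s i a) (S B : Set X) ≤ dist (s i a) (s i b) := h1
        _ < dist a b := hs i a b hab'
        _ = infDist a (B : Set X) := hab.symm
        _ ≤ dist A B := h2
  -- S is a weak contraction on the hyperspace
  have hSweak : ∀ A B : NonemptyCompacts X, A ≠ B → dist (S A) (S B) < dist A B := by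
    intro A B hAB
    have hr : 0 < dist A B := dist_pos.2 hAB
    -- maxima of infDist functions on the compact sets S A and S B
    obtain ⟨x1, hx1, hmax1⟩ := (S A).isCompact.exists_isMaxOn (S A).nonempty
      (continuous_infDist_pt (S B : Set X)).continuousOn
    obtain ⟨x2, hx2, hmax2⟩ := (S B).isCompact.exists_isMaxOn (S B).nonempty
      (continuous_infDist_pt (S A : Set X)).continuousOn
    have hv1 : infDist x1 (S B : Set X) < dist A B := key A B hr x1 hx1
    have hv2 : infDist x2 (S A : Set X) < dist A B := by
      rw [dist_comm A B]; exact key B A (by rwa [dist_comm]) x2 hx2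
    have hle : dist (S A) (S B) ≤ max (infDist x1 (S B : Set X)) (infDist x2 (S A : Set X)) := by
      rw [NonemptyCompacts.dist_eq]
      apply hausdorffDist_le_of_infDist (le_max_of_le_left infDist_nonneg)
      · exact fun x hx => le_max_of_le_left (hmax1 hx)
      · exact fun x hx => le_max_of_le_right (hmax2 hx)
    exact hle.trans_lt (max_lt hv1 hv2)
  -- apply Edelstein on the hyperspace
  have : Nonempty (NonemptyCompacts X) :=
    ⟨⟨⟨{Classical.arbitrary X}, isCompact_singleton⟩, singleton_nonempty _⟩⟩
  obtain ⟨A, hA, hA'⟩ := edelstein_aux S hSweak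
  refine ⟨A, ?_, ?_⟩
  · have h := hScoe A
    rw [hA] at h
    exact h
  · intro B hB
    refine hA' B (NonemptyCompacts.ext ?_)
    rw [hScoe]
    exact hB.symm
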